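/- Let X1, X2, X3 be mutually independent finite random variables and Y another finite random variable. Then the set function S ↦ I(X_S; Y | X_{S̄}) on subsets S of {1,2,3} (where S̄ = {1,2,3} ∖ S) is monotone nondecreasing: if T ⊆ S then I(X_T; Y | X_{T̄}) ≤ I(X_S; Y | X_{S̄}). -/
import Mathlib


open Finset

noncomputable def rvDist {Ω : Type*} [Fintype Ω] {A : Type*} [Fintype A] [DecidableEq A]
    (p : Ω → ℝ) (X : Ω → A) (a : A) : ℝ :=
  ∑ ω, if X ω = a then p ω else 0

noncomputable def rvEnt {Ω : Type*} [Fintype Ω] {A : Type*} [Fintype A] [DecidableEq A]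
    (p : Ω → ℝ) (X : Ω → A) : ℝ :=
  ∑ a, Real.negMulLog (rvDist p X a)

/-- Mutual information `I(X; Y)`. -/
noncomputable def rvMI {Ω : Type*} [Fintype Ω] {A B : Type*} [Fintype A] [DecidableEq A]
    [Fintype B] [DecidableEq B] (p : Ω → ℝ) (X : Ω → A) (Y : Ω → B) : ℝ :=
  rvEnt p X + rvEnt p Y - rvEnt p (fun ω => (X ω, Y ω))

/-- Conditional mutual information `I(X; Y | Z)`. -/
noncomputable def rvCMI {Ω : Type*} [Fintype Ω] {A B C : Type*} [Fintype A] [DecidableEq A]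
    [Fintype B] [DecidableEq B] [Fintype C] [DecidableEq C]
    (p : Ω → ℝ) (X : Ω → A) (Y : Ω → B) (Z : Ω → C) : ℝ :=
  rvEnt p (fun ω => (X ω, Z ω)) + rvEnt p (fun ω => (Y ω, Z ω))
    - rvEnt p (fun ω => (X ω, Y ω, Z ω)) - rvEnt p Z

lemma rvDist_nonneg' {Ω : Type*} [Fintype Ω] {A : Type*} [Fintype A] [DecidableEq A]
    (p : Ω → ℝ) (hp : ∀ ω, 0 ≤ p ω) (X : Ω → A) (a : A) : 0 ≤ rvDist p X a := by
  apply Finset.sum_nonneg; intro ω _; split <;> simp [hp ω]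

lemma sum_rvDist' {Ω : Type*} [Fintype Ω] {A : Type*} [Fintype A] [DecidableEq A]
    (p : Ω → ℝ) (X : Ω → A) : ∑ a, rvDist p X a = ∑ ω, p ω := by
  unfold rvDist
  rw [Finset.sum_comm]
  exact Finset.sum_congr rfl fun ω _ => by simp

lemma rvEnt_comp_inj' {Ω : Type*} [Fintype Ω] {A A' : Type*} [Fintype A] [DecidableEq A]
    [Fintype A'] [DecidableEq A'] (p : Ω → ℝ) (f : A → A') (hf : Function.Injective f)
    (X : Ω → A) : rvEnt p (fun ω => f (X ω)) = rvEnt p X := by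
  have hdist : ∀ a, rvDist p (fun ω => f (X ω)) (f a) = rvDist p X a := by
    intro a; unfold rvDist
    exact Finset.sum_congr rfl fun ω _ => by simp [hf.eq_iff]
  have hzero : ∀ a' ∉ Finset.image f Finset.univ, rvDist p (fun ω => f (X ω)) a' = 0 := by
    intro a' ha'
    simp only [Finset.mem_image, Finset.mem_univ, true_and, not_exists] at ha'
    unfold rvDist
    refine Finset.sum_eq_zero fun ω _ => ?_
    rw [if_neg fun h => ha' (X ω) h]
  unfold rvEnt
  rw [← Finset.sum_subset (Finset.subset_univ (Finset.image f Finset.univ))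
    (fun a' _ ha' => by rw [hzero a' ha', Real.negMulLog_zero]),
    Finset.sum_image (fun a _ b _ h => hf h)]
  exact Finset.sum_congr rfl fun a _ => by rw [hdist]

section marg
variable {Ω : Type*} [Fintype Ω] {A B C : Type*} [Fintype A] [DecidableEq A]
    [Fintype B] [DecidableEq B] [Fintype C] [DecidableEq C]
    (p : Ω → ℝ) (X : Ω → A) (Y : Ω → B) (Z : Ω → C)

lemma marg_XZ (a : A) (c : C) : rvDist p (fun ω => (X ω, Z ω)) (a, c)
    = ∑ b, rvDist p (fun ω => (X ω, Y ω, Z ω)) (a, b, c) := by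
  unfold rvDist
  rw [Finset.sum_comm]
  refine Finset.sum_congr rfl fun ω _ => ?_
  by_cases h1 : X ω = a <;> by_cases h3 : Z ω = c <;>
    simp [Prod.ext_iff, h1, h3]

lemma marg_YZ (b : B) (c : C) : rvDist p (fun ω => (Y ω, Z ω)) (b, c)
    = ∑ a, rvDist p (fun ω => (X ω, Y ω, Z ω)) (a, b, c) := by
  unfold rvDist
  rw [Finset.sum_comm]
  refine Finset.sum_congr rfl fun ω _ => ?_
  by_cases h2 : Y ω = b <;> by_cases h3 : Z ω = c <;>
    simp [Prod.ext_iff, h2, h3]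

lemma marg_snd (c : C) : rvDist p Z c
    = ∑ b, rvDist p (fun ω => (Y ω, Z ω)) (b, c) := by
  unfold rvDist
  rw [Finset.sum_comm]
  refine Finset.sum_congr rfl fun ω _ => ?_
  by_cases h3 : Z ω = c <;> simp [Prod.ext_iff, h3]

lemma marg_Z (c : C) : rvDist p Z c
    = ∑ a, ∑ b, rvDist p (fun ω => (X ω, Y ω, Z ω)) (a, b, c) := by
  rw [marg_snd p Y Z c]
  rw [Finset.sum_comm]
  exact Finset.sum_congr rfl fun b _ => marg_YZ p X Y Z b c
end marg

lemma negMulLog_sum' {ι : Type*} (s : Finset ι) (f : ι → ℝ) :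
    Real.negMulLog (∑ i ∈ s, f i) = ∑ i ∈ s, -(f i * Real.log (∑ j ∈ s, f j)) := by
  rw [Real.negMulLog, neg_mul, Finset.sum_mul, ← Finset.sum_neg_distrib]

lemma sum3_rot {A B C : Type*} [Fintype A] [Fintype B] [Fintype C] (f : A → B → C → ℝ) :
    (∑ a, ∑ b, ∑ c, f a b c) = ∑ c, ∑ a, ∑ b, f a b c := by
  rw [show (∑ a, ∑ b, ∑ c, f a b c) = ∑ a, ∑ c, ∑ b, f a b c from
    Finset.sum_congr rfl fun a _ => Finset.sum_comm, Finset.sum_comm]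

lemma pointwise_ineq (x y z w : ℝ) (hx : 0 ≤ x) (hy : x ≤ y) (hz : x ≤ z) (hw : x ≤ w) :
    x - y * z / w ≤ x * (Real.log x + Real.log w - Real.log y - Real.log z) := by
  rcases eq_or_lt_of_le hx with h0 | h0
  · rw [← h0]
    simp only [zero_mul, zero_sub]
    have : 0 ≤ y * z / w := div_nonneg (mul_nonneg (by linarith) (by linarith)) (by linarith)
    linarith
  · have hy' : 0 < y := lt_of_lt_of_le h0 hy
    have hz' : 0 < z := lt_of_lt_of_le h0 hz
    have hw' : 0 < w := lt_of_lt_of_le h0 hw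
    have hlog : Real.log (y * z / (x * w)) ≤ y * z / (x * w) - 1 :=
      Real.log_le_sub_one_of_pos (by positivity)
    have hexp : Real.log (y * z / (x * w)) = Real.log y + Real.log z - Real.log x - Real.log w := by
      rw [Real.log_div (by positivity) (by positivity), Real.log_mul hy'.ne' hz'.ne',
        Real.log_mul h0.ne' hw'.ne']
      ring
    have h2 : Real.log y + Real.log z - Real.log x - Real.log w ≤ y * z / (x * w) - 1 := by
      rw [← hexp]; exact hlog
    have h3 : x * (Real.log y + Real.log z - Real.log x - Real.log w) ≤ x * (y * z / (x * w) - 1) :=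
      mul_le_mul_of_nonneg_left h2 hx
    have h4 : x * (y * z / (x * w) - 1) = y * z / w - x := by
      field_simp
    nlinarith [h3, h4]

lemma rvCMI_nonneg {Ω : Type*} [Fintype Ω] {A B C : Type*} [Fintype A] [DecidableEq A]
    [Fintype B] [DecidableEq B] [Fintype C] [DecidableEq C]
    (p : Ω → ℝ) (hp : ∀ ω, 0 ≤ p ω) (hsum : ∑ ω, p ω = 1)
    (X : Ω → A) (Y : Ω → B) (Z : Ω → C) : 0 ≤ rvCMI p X Y Z := by
  set q : A → B → C → ℝ := fun a b c => rvDist p (fun ω => (X ω, Y ω, Z ω)) (a, b, c) with hq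
  have hq0 : ∀ a b c, 0 ≤ q a b c := fun a b c => rvDist_nonneg' p hp _ _
  set qXZ : A → C → ℝ := fun a c => ∑ b, q a b c with hqXZ
  set qYZ : B → C → ℝ := fun b c => ∑ a, q a b c with hqYZ
  set qZ : C → ℝ := fun c => ∑ a, ∑ b, q a b c with hqZ
  have hqXZ0 : ∀ a c, 0 ≤ qXZ a c := fun a c => Finset.sum_nonneg fun b _ => hq0 a b c
  have hqYZ0 : ∀ b c, 0 ≤ qYZ b c := fun b c => Finset.sum_nonneg fun a _ => hq0 a b c
  have hqZ0 : ∀ c, 0 ≤ qZ c := fun c =>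
    Finset.sum_nonneg fun a _ => Finset.sum_nonneg fun b _ => hq0 a b c
  -- total mass
  have htot : (∑ a, ∑ b, ∑ c, q a b c) = 1 := by
    have h1 : (∑ x : A × B × C, rvDist p (fun ω => (X ω, Y ω, Z ω)) x) = 1 := by
      rw [sum_rvDist', hsum]
    rw [← h1, Fintype.sum_prod_type]
    refine Finset.sum_congr rfl fun a _ => ?_
    exact (Fintype.sum_prod_type (fun y : B × C =>
      rvDist p (fun ω => (X ω, Y ω, Z ω)) (a, y.1, y.2))).symm
  have hZtot : (∑ c, qZ c) = 1 := by
    rw [hqZ, ← htot]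
    exact (sum3_rot q).symm
  -- marginal sums
  have hSA : ∀ c, (∑ a, qXZ a c) = qZ c := fun c => rfl
  have hSB : ∀ c, (∑ b, qYZ b c) = qZ c := fun c => Finset.sum_comm
  -- entropies as triple sums
  have e3 : rvEnt p (fun ω => (X ω, Y ω, Z ω))
      = ∑ a, ∑ b, ∑ c, Real.negMulLog (q a b c) := by
    unfold rvEnt
    rw [Fintype.sum_prod_type]
    exact Finset.sum_congr rfl fun a _ => Fintype.sum_prod_type _
  have e1 : rvEnt p (fun ω => (X ω, Z ω))
      = ∑ a, ∑ b, ∑ c, -(q a b c * Real.log (qXZ a c)) := by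
    unfold rvEnt
    rw [Fintype.sum_prod_type]
    refine Finset.sum_congr rfl fun a _ => ?_
    rw [show (∑ b, ∑ c, -(q a b c * Real.log (qXZ a c)))
        = ∑ c, ∑ b, -(q a b c * Real.log (qXZ a c)) from Finset.sum_comm]
    refine Finset.sum_congr rfl fun c _ => ?_
    rw [marg_XZ p X Y Z a c, negMulLog_sum']
  have e2 : rvEnt p (fun ω => (Y ω, Z ω))
      = ∑ a, ∑ b, ∑ c, -(q a b c * Real.log (qYZ b c)) := by
    have h : rvEnt p (fun ω => (Y ω, Z ω))
        = ∑ b, ∑ c, ∑ a, -(q a b c * Real.log (qYZ b c)) := by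
      unfold rvEnt
      rw [Fintype.sum_prod_type]
      refine Finset.sum_congr rfl fun b _ => Finset.sum_congr rfl fun c _ => ?_
      rw [marg_YZ p X Y Z b c, negMulLog_sum']
    rw [h, sum3_rot (fun b c a => -(q a b c * Real.log (qYZ b c)))]
  have e4 : rvEnt p Z = ∑ a, ∑ b, ∑ c, -(q a b c * Real.log (qZ c)) := by
    have h : rvEnt p Z = ∑ c, ∑ a, ∑ b, -(q a b c * Real.log (qZ c)) := by
      unfold rvEnt
      refine Finset.sum_congr rfl fun c _ => ?_
      rw [marg_Z p X Y Z c, negMulLog_sum']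
      refine Finset.sum_congr rfl fun a _ => ?_
      rw [Finset.sum_mul, ← Finset.sum_neg_distrib]
    rw [h, ← sum3_rot (fun a b c => -(q a b c * Real.log (qZ c)))]
  -- assemble
  have hqle_XZ : ∀ a b c, q a b c ≤ qXZ a c := fun a b c =>
    Finset.single_le_sum (fun b _ => hq0 a b c) (Finset.mem_univ b)
  have hqle_YZ : ∀ a b c, q a b c ≤ qYZ b c := fun a b c =>
    Finset.single_le_sum (fun a _ => hq0 a b c) (Finset.mem_univ a)
  have hqle_Z : ∀ a b c, q a b c ≤ qZ c := fun a b c =>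
    le_trans (hqle_XZ a b c)
      (Finset.single_le_sum (fun a _ => hqXZ0 a c) (Finset.mem_univ a))
  have combined : (∑ a, ∑ b, ∑ c, -(q a b c * Real.log (qXZ a c)))
      + (∑ a, ∑ b, ∑ c, -(q a b c * Real.log (qYZ b c)))
      - (∑ a, ∑ b, ∑ c, Real.negMulLog (q a b c))
      - (∑ a, ∑ b, ∑ c, -(q a b c * Real.log (qZ c)))
      = ∑ a, ∑ b, ∑ c, q a b c * (Real.log (q a b c) + Real.log (qZ c)
          - Real.log (qXZ a c) - Real.log (qYZ b c)) := by
    simp only [← Finset.sum_add_distrib, ← Finset.sum_sub_distrib]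
    refine Finset.sum_congr rfl fun a _ => Finset.sum_congr rfl fun b _ =>
      Finset.sum_congr rfl fun c _ => ?_
    rw [Real.negMulLog]
    ring
  have hle : (∑ a, ∑ b, ∑ c, (q a b c - qXZ a c * qYZ b c / qZ c))
      ≤ ∑ a, ∑ b, ∑ c, q a b c * (Real.log (q a b c) + Real.log (qZ c)
          - Real.log (qXZ a c) - Real.log (qYZ b c)) := by
    refine Finset.sum_le_sum fun a _ => Finset.sum_le_sum fun b _ =>
      Finset.sum_le_sum fun c _ => ?_
    exact pointwise_ineq (q a b c) (qXZ a c) (qYZ b c) (qZ c)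
      (hq0 a b c) (hqle_XZ a b c) (hqle_YZ a b c) (hqle_Z a b c)
  have base : (0:ℝ) ≤ ∑ a, ∑ b, ∑ c, (q a b c - qXZ a c * qYZ b c / qZ c) := by
    have split : (∑ a, ∑ b, ∑ c, (q a b c - qXZ a c * qYZ b c / qZ c))
        = (∑ a, ∑ b, ∑ c, q a b c) - ∑ a, ∑ b, ∑ c, qXZ a c * qYZ b c / qZ c := by
      simp only [Finset.sum_sub_distrib]
    have hsum2 : (∑ a, ∑ b, ∑ c, qXZ a c * qYZ b c / qZ c)
        = ∑ c, qZ c * qZ c / qZ c := by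
      rw [sum3_rot (fun a b c => qXZ a c * qYZ b c / qZ c)]
      refine Finset.sum_congr rfl fun c _ => ?_
      calc (∑ a, ∑ b, qXZ a c * qYZ b c / qZ c)
          = ∑ a, qXZ a c * qZ c / qZ c := by
            refine Finset.sum_congr rfl fun a _ => ?_
            rw [← Finset.sum_div, ← Finset.mul_sum, hSB c]
        _ = (∑ a, qXZ a c) * qZ c / qZ c := by
            rw [← Finset.sum_div, ← Finset.sum_mul]
        _ = qZ c * qZ c / qZ c := by rw [hSA c]
    have hbd : (∑ c, qZ c * qZ c / qZ c) ≤ ∑ c, qZ c := by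
      refine Finset.sum_le_sum fun c _ => ?_
      rcases eq_or_lt_of_le (hqZ0 c) with h | h
      · rw [← h]; simp
      · rw [mul_div_assoc, div_self h.ne', mul_one]
    rw [split, htot, hsum2]
    linarith [hbd, hZtot]
  unfold rvCMI
  rw [e1, e2, e3, e4]
  calc (0:ℝ) ≤ ∑ a, ∑ b, ∑ c, (q a b c - qXZ a c * qYZ b c / qZ c) := base
    _ ≤ _ := hle
    _ = _ := combined.symm


/-- The tuple of random variables `(X i : i ∈ S)`. -/
noncomputable def tup {Ω A : Type*} (X : Fin 3 → Ω → A) (S : Finset (Fin 3)) :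
    Ω → (S → A) := fun ω i => X i.1 ω

theorem stmt15 {Ω A B : Type*} [Fintype Ω] [Fintype A] [DecidableEq A]
    [Fintype B] [DecidableEq B]
    (p : Ω → ℝ) (hp : ∀ ω, 0 ≤ p ω) (hsum : ∑ ω, p ω = 1)
    (X : Fin 3 → Ω → A) (Y : Ω → B)
    (hindep : ∀ f : Fin 3 → A, rvDist p (fun ω i => X i ω) f = ∏ i, rvDist p (X i) (f i)) :
    ∀ S T : Finset (Fin 3), T ⊆ S →
      rvCMI p (tup X T) Y (tup X Tᶜ) ≤ rvCMI p (tup X S) Y (tup X Sᶜ) := by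
  intro S T hTS
  set full : Ω → (Fin 3 → A) := fun ω i => X i ω with hfull
  have claimA : ∀ R : Finset (Fin 3), rvCMI p (tup X R) Y (tup X Rᶜ)
      = rvEnt p full + rvEnt p (fun ω => (Y ω, tup X Rᶜ ω))
        - rvEnt p (fun ω => (Y ω, full ω)) - rvEnt p (tup X Rᶜ) := by
    intro R
    unfold rvCMI
    have hinj1 : Function.Injective (fun g : Fin 3 → A =>
        ((fun i : R => g i.1), (fun i : (Rᶜ : Finset (Fin 3)) => g i.1))) := by
      intro g g' h
      funext i
      by_cases hi : i ∈ R
      · exact congrFun (congrArg Prod.fst h) ⟨i, hi⟩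
      · exact congrFun (congrArg Prod.snd h) ⟨i, Finset.mem_compl.mpr hi⟩
    have h1 : rvEnt p (fun ω => (tup X R ω, tup X Rᶜ ω)) = rvEnt p full :=
      rvEnt_comp_inj' p _ hinj1 full
    have hinj2 : Function.Injective (fun x : B × (Fin 3 → A) =>
        ((fun i : R => x.2 i.1), x.1, (fun i : (Rᶜ : Finset (Fin 3)) => x.2 i.1))) := by
      intro x x' h
      have hb : x.1 = x'.1 := congrArg (fun y => y.2.1) h
      have hg : x.2 = x'.2 := by
        funext i
        by_cases hi : i ∈ R
        · exact congrFun (congrArg Prod.fst h) ⟨i, hi⟩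
        · exact congrFun (congrArg (fun y => y.2.2) h) ⟨i, Finset.mem_compl.mpr hi⟩
      exact Prod.ext hb hg
    have h2 : rvEnt p (fun ω => (tup X R ω, Y ω, tup X Rᶜ ω))
        = rvEnt p (fun ω => (Y ω, full ω)) :=
      rvEnt_comp_inj' p _ hinj2 (fun ω => (Y ω, full ω))
    rw [h1, h2]
  have hUV : Sᶜ ⊆ Tᶜ := Finset.compl_subset_compl.mpr hTS
  have claimB : rvCMI p (tup X (Tᶜ \ Sᶜ)) Y (tup X Sᶜ)
      = rvEnt p (tup X Tᶜ) + rvEnt p (fun ω => (Y ω, tup X Sᶜ ω))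
        - rvEnt p (fun ω => (Y ω, tup X Tᶜ ω)) - rvEnt p (tup X Sᶜ) := by
    unfold rvCMI
    have hinj1 : Function.Injective (fun g : (Tᶜ : Finset (Fin 3)) → A =>
        ((fun i : (Tᶜ \ Sᶜ : Finset (Fin 3)) => g ⟨i.1, Finset.sdiff_subset i.2⟩),
         (fun i : (Sᶜ : Finset (Fin 3)) => g ⟨i.1, hUV i.2⟩))) := by
      intro g g' h
      funext i
      by_cases hi : i.1 ∈ Sᶜ
      · exact congrFun (congrArg Prod.snd h) ⟨i.1, hi⟩
      · exact congrFun (congrArg Prod.fst h) ⟨i.1, Finset.mem_sdiff.mpr ⟨i.2, hi⟩⟩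
    have h1 : rvEnt p (fun ω => (tup X (Tᶜ \ Sᶜ) ω, tup X Sᶜ ω))
        = rvEnt p (tup X Tᶜ) :=
      rvEnt_comp_inj' p _ hinj1 (tup X Tᶜ)
    have hinj2 : Function.Injective (fun x : B × ((Tᶜ : Finset (Fin 3)) → A) =>
        ((fun i : (Tᶜ \ Sᶜ : Finset (Fin 3)) => x.2 ⟨i.1, Finset.sdiff_subset i.2⟩),
         x.1,
         (fun i : (Sᶜ : Finset (Fin 3)) => x.2 ⟨i.1, hUV i.2⟩))) := by
      intro x x' h
      have hb : x.1 = x'.1 := congrArg (fun y => y.2.1) h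
      have hg : x.2 = x'.2 := by
        funext i
        by_cases hi : i.1 ∈ Sᶜ
        · exact congrFun (congrArg (fun y => y.2.2) h) ⟨i.1, hi⟩
        · exact congrFun (congrArg Prod.fst h) ⟨i.1, Finset.mem_sdiff.mpr ⟨i.2, hi⟩⟩
      exact Prod.ext hb hg
    have h2 : rvEnt p (fun ω => (tup X (Tᶜ \ Sᶜ) ω, Y ω, tup X Sᶜ ω))
        = rvEnt p (fun ω => (Y ω, tup X Tᶜ ω)) :=
      rvEnt_comp_inj' p _ hinj2 (fun ω => (Y ω, tup X Tᶜ ω))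
    rw [h1, h2]
  have key : (0:ℝ) ≤ rvCMI p (tup X (Tᶜ \ Sᶜ)) Y (tup X Sᶜ) :=
    rvCMI_nonneg p hp hsum _ _ _
  rw [claimB] at key
  rw [claimA S, claimA T]
  linarith
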